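/- arXiv:2107.02729 — 2 statements merged into one kernel-verified Lean document; each statement's English description precedes it below -/
import Mathlib

section
/- In the unrolled dynamic Bayesian network, under the Markov and faithfulness assumptions, a state component s_{i,t} has a directed path to some future reward r_{t+τ} (τ ≥ 1) if and only if s_{i,t} is conditionally dependent on a_t given the cumulative future reward R_{t+1} and any subset of the other time-t state components. -/
/-- Nodes of the unrolled DBN, augmented with the cumulative future reward
`R_t = Σ_{u ≥ t} γ^{u-t} r_u`, a common child of all rewards `r_u`, `u ≥ t`. -/
inductive RLNode (ι : Type*) where
  | state (i : ι) (t : ℕ)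
  | action (t : ℕ)
  | reward (t : ℕ)
  | cum (t : ℕ)

/-- Edges of the unrolled DBN with the cumulative reward node: the structural
masks `Sedge`, `Aedge`, `Redge` as before (edges only from `s_{i,t}` to
`s_{j,t+1}`, from `a_t` to `s_{j,t+1}` and `r_{t+1}`, from `s_{i,t}` to
`r_{t+1}`), and `r_u → R_v` whenever `v ≤ u` (so `R_{t+1}` is a collider child
of all future rewards). -/
def RLEdge {ι : Type*} (Sedge : ι → ι → Prop) (Aedge Redge : ι → Prop) :
    RLNode ι → RLNode ι → Prop
  | RLNode.state i t, RLNode.state j t' => t' = t + 1 ∧ Sedge i j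
  | RLNode.state i t, RLNode.reward t' => t' = t + 1 ∧ Redge i
  | RLNode.action t, RLNode.state j t' => t' = t + 1 ∧ Aedge j
  | RLNode.action t, RLNode.reward t' => t' = t + 1
  | RLNode.reward u, RLNode.cum v => v ≤ u
  | _, _ => False

def Adjacent {V : Type*} (E : V → V → Prop) (a b : V) : Prop := E a b ∨ E b a

def IsWalkBetween {V : Type*} (E : V → V → Prop) (p : List V) (x y : V) : Prop :=
  List.Chain' (Adjacent E) p ∧ p.head? = some x ∧ p.getLast? = some y

def Descendant {V : Type*} (E : V → V → Prop) (a b : V) : Prop :=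
  Relation.ReflTransGen E a b

/-- A path blocked by `Z`: a non-collider in `Z`, or a collider none of whose
descendants (including itself) is in `Z`. -/
def Blocked {V : Type*} (E : V → V → Prop) (Z : Set V) (p : List V) : Prop :=
  ∃ (l₁ l₂ : List V) (i m j : V), p = l₁ ++ i :: m :: j :: l₂ ∧
    ((¬(E i m ∧ E j m) ∧ m ∈ Z) ∨
      (E i m ∧ E j m ∧ ∀ w, Descendant E m w → w ∉ Z))

/-- Pairwise d-separation of `x` and `y` given `Z`. -/
def DSep {V : Type*} (E : V → V → Prop) (x y : V) (Z : Set V) : Prop :=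
  ∀ p, IsWalkBetween E p x y → Blocked E Z p

/-!
If `s_{i,t} → ⋯ → r_{t+τ}` is a directed path, extending it by
`r_{t+τ} → R_{t+1} ← r_{t+1} ← a_t` gives a walk that none of the conditioning sets blocks: its
one collider is `R_{t+1}` itself, and its non-colliders are `r_{t+1}` and descendants of `s_{i,t}`,
none of which is `R_{t+1}` or another time-`t` state.

Conversely, if `s_{i,t}` reaches no reward, conditioning on `R_{t+1}` and all other time-`t` states
blocks every walk to `a_t`. Along an unblocked walk from `s_{i,t}` each node is entered either
against an edge at a time before `t`, or along an edge at a time at most `t` or at a descendant of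
`s_{i,t}` (`ActiveArrival`): the conditioned states stop every forward move out of time `t` except
from `s_{i,t}`, and the only collider the set opens is `R_{t+1}`, which neither a node of time at
most `t` nor a descendant of `s_{i,t}` reaches. As `a_t` has no parents and has time `t`, such a
walk never arrives at `a_t`.
-/

section Walks

variable {V : Type*} {E : V → V → Prop} {Z : Set V}

def BlocksAt (E : V → V → Prop) (Z : Set V) (a m b : V) : Prop :=
  (¬(E a m ∧ E b m) ∧ m ∈ Z) ∨ (E a m ∧ E b m ∧ ∀ w, Descendant E m w → w ∉ Z)

lemma blocked_cons_cons_cons_iff {a m b : V} {l : List V} :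
    Blocked E Z (a :: m :: b :: l) ↔ BlocksAt E Z a m b ∨ Blocked E Z (m :: b :: l) := by
  constructor
  · rintro ⟨_ | ⟨c, l₁⟩, l₂, a', m', b', hp, hblocks⟩
    · simp only [List.nil_append, List.cons.injEq] at hp
      obtain ⟨rfl, rfl, rfl, -⟩ := hp
      exact .inl hblocks
    · simp only [List.cons_append, List.cons.injEq] at hp
      exact .inr ⟨l₁, l₂, a', m', b', hp.2, hblocks⟩
  · rintro (hblocks | ⟨l₁, l₂, a', m', b', hp, hblocks⟩)
    · exact ⟨[], l, a, m, b, rfl, hblocks⟩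
    · exact ⟨a :: l₁, l₂, a', m', b', by rw [hp]; rfl, hblocks⟩

lemma not_blocked_pair (a b : V) : ¬ Blocked E Z [a, b] := by
  rintro ⟨l₁, l₂, a', m', b', hp, -⟩
  have := congrArg List.length hp
  simp at this
  omega

lemma not_blocked_cons_of_not_collider {a m b : V} {l : List V} (hnc : ¬ (E a m ∧ E b m))
    (hm : m ∉ Z) (hl : ¬ Blocked E Z (m :: b :: l)) :
    ¬ Blocked E Z (a :: m :: b :: l) := by
  rw [blocked_cons_cons_cons_iff]
  rintro ((⟨-, hmZ⟩ | ⟨ham, hbm, -⟩) | hblocked)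
  exacts [hm hmZ, hnc ⟨ham, hbm⟩, hl hblocked]

lemma not_blocked_cons_of_collider {a m b : V} {l : List V} (ham : E a m) (hbm : E b m)
    (hm : m ∈ Z) (hl : ¬ Blocked E Z (m :: b :: l)) :
    ¬ Blocked E Z (a :: m :: b :: l) := by
  rw [blocked_cons_cons_cons_iff]
  rintro ((⟨hnc, -⟩ | ⟨-, -, hdesc⟩) | hblocked)
  exacts [hnc ⟨ham, hbm⟩, hdesc m .refl hm, hl hblocked]

lemma exists_invariant_of_getLast?_eq (P : V → V → Prop)
    (step : ∀ a m b, P a m → Adjacent E m b → ¬ BlocksAt E Z a m b → P m b) :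
    ∀ (l : List V) (a b : V), List.IsChain (Adjacent E) (a :: b :: l) → P a b →
      ¬ Blocked E Z (a :: b :: l) → ∀ y, (a :: b :: l).getLast? = some y → ∃ a', P a' y
  | [], a, b, _, hab, _, y, hy => ⟨a, by simp_all⟩
  | c :: l, a, b, hchain, hab, hnb, y, hy => by
    rw [List.isChain_cons_cons] at hchain
    rw [blocked_cons_cons_cons_iff, not_or] at hnb
    rw [List.getLast?_cons_cons] at hy
    exact exists_invariant_of_getLast?_eq P step l b c hchain.2
      (step a b c hab (List.isChain_cons_cons.1 hchain.2).1 hnb.1) hnb.2 y hy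

lemma dsep_of_invariant {x y : V} (hxy : x ≠ y) (P : V → V → Prop)
    (start : ∀ b, Adjacent E x b → P x b)
    (step : ∀ a m b, P a m → Adjacent E m b → ¬ BlocksAt E Z a m b → P m b)
    (hend : ∀ a, ¬ P a y) : DSep E x y Z := by
  rintro (_ | ⟨x', _ | ⟨b, l⟩⟩) ⟨hchain, hx, hy⟩ <;> simp only [List.head?_cons,
    List.head?_nil, Option.some.injEq, reduceCtorEq] at hx
  · simp_all
  · subst hx
    by_contra hnb
    obtain ⟨a', ha'⟩ := exists_invariant_of_getLast?_eq P step l x' b hchain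
      (start b (List.isChain_cons_cons.1 hchain).1) hnb y hy
    exact hend a' ha'

end Walks

namespace RLNode

variable {ι : Type*}

def time : RLNode ι → ℕ
  | state _ t | action t | reward t | cum t => t

def otherStates (i : ι) (t : ℕ) : Set (RLNode ι) := {n | ∃ j, j ≠ i ∧ n = state j t}

end RLNode

namespace RLEdge

open RLNode Relation

variable {ι : Type*} {Sedge : ι → ι → Prop} {Aedge Redge : ι → Prop}

local notation "E" => RLEdge Sedge Aedge Redge

lemma not_cum_left {v : ℕ} {b : RLNode ι} : ¬ E (cum v) b := by
  cases b <;> simp [RLEdge]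

lemma not_action_right {a : RLNode ι} {u : ℕ} : ¬ E a (action u) := by
  cases a <;> simp [RLEdge]

lemma exists_reward_of_cum_right {a : RLNode ι} {v : ℕ} (h : E a (cum v)) :
    ∃ u, a = reward u ∧ v ≤ u := by
  cases a <;> simp_all [RLEdge]

lemma time_eq_succ {a b : RLNode ι} (h : E a b) (hb : ∀ v, b ≠ cum v) :
    b.time = a.time + 1 := by
  cases a <;> cases b <;> simp_all [RLEdge, time]

lemma time_le_succ {a b : RLNode ι} (h : E a b) : b.time ≤ a.time + 1 := by
  cases a <;> cases b <;> (simp_all [RLEdge, time]; try omega)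

lemma asymm {a b : RLNode ι} (h : E a b) : ¬ E b a := by
  cases a <;> cases b <;> (simp_all [RLEdge]; try omega)

lemma time_lt_of_transGen {a b : RLNode ι} (h : TransGen E a b) (hb : ∀ v, b ≠ cum v) :
    a.time < b.time := by
  induction h with
  | single h => have := time_eq_succ h hb; omega
  | @tail c b _ hcb ih =>
    have hc : ∀ v, c ≠ cum v := by rintro v rfl; exact not_cum_left hcb
    have := time_eq_succ hcb hb
    have := ih hc
    omega

lemma eq_of_reflTransGen_cum {v : ℕ} {w : RLNode ι} (h : ReflTransGen E (cum v) w) :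
    w = cum v := by
  rcases h.cases_head with h | ⟨c, hc, -⟩
  exacts [h.symm, (not_cum_left hc).elim]

lemma not_mem_otherStates_of_reflTransGen {i : ι} {t : ℕ} {w : RLNode ι}
    (h : ReflTransGen E (state i t) w) : w ∉ otherStates i t := by
  rintro ⟨j, hj, rfl⟩
  rcases reflTransGen_iff_eq_or_transGen.1 h with h | h
  · simp_all
  · simpa [time] using time_lt_of_transGen h (by simp)

section Forward

variable {i : ι} {t τ : ℕ} {S : Set (RLNode ι)}

lemma not_mem_of_reflTransGen_reward (hS : S ⊆ otherStates i t) {m : RLNode ι} {u : ℕ}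
    (hxm : ReflTransGen E (state i t) m) (hm : ReflTransGen E m (reward u)) :
    m ∉ insert (cum (t + 1)) S := by
  rintro (rfl | hmS)
  · simpa using eq_of_reflTransGen_cum hm
  · exact not_mem_otherStates_of_reflTransGen hxm (hS hmS)

lemma exists_unblocked_walk (hτ : 1 ≤ τ) (hS : S ⊆ otherStates i t) {m : RLNode ι}
    (hm : ReflTransGen E m (reward (t + τ))) (hxm : ReflTransGen E (state i t) m) :
    ∃ b l, List.IsChain (Adjacent E) (m :: b :: l) ∧
      (m :: b :: l).getLast? = some (action t) ∧ E m b ∧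
      ¬ Blocked E (insert (cum (t + 1)) S) (m :: b :: l) := by
  induction hm using ReflTransGen.head_induction_on with
  | refl =>
    have hrR : E (reward (t + τ)) (cum (t + 1)) := by simp [RLEdge]; omega
    have hr₁R : E (reward (t + 1)) (cum (t + 1)) := by simp [RLEdge]
    have har₁ : E (action t) (reward (t + 1)) := by simp [RLEdge]
    refine ⟨cum (t + 1), [reward (t + 1), action t], ?_, rfl, hrR, ?_⟩
    · simp [Adjacent, hrR, hr₁R, har₁]
    · refine not_blocked_cons_of_collider hrR hr₁R (Set.mem_insert _ _) ?_
      refine not_blocked_cons_of_not_collider (fun h => not_cum_left h.1) ?_ (not_blocked_pair _ _)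
      rintro (h | h)
      · simp at h
      · simpa [otherStates] using hS h
  | head hab hbr ih =>
    obtain ⟨c, l, hchain, hlast, hbc, hnb⟩ := ih (hxm.tail hab)
    refine ⟨_, c :: l, List.isChain_cons_cons.2 ⟨.inl hab, hchain⟩, ?_, hab, ?_⟩
    · rwa [List.getLast?_cons_cons]
    · exact not_blocked_cons_of_not_collider (fun h => asymm hbc h.2)
        (not_mem_of_reflTransGen_reward hS (hxm.tail hab) hbr) hnb

lemma not_dsep_of_transGen_reward (hτ : 1 ≤ τ) (hS : S ⊆ otherStates i t)
    (h : TransGen E (state i t) (reward (t + τ))) :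
    ¬ DSep E (state i t) (action t) (insert (cum (t + 1)) S) := by
  obtain ⟨b, l, hchain, hlast, -, hnb⟩ := exists_unblocked_walk hτ hS h.to_reflTransGen .refl
  exact fun hdsep => hnb (hdsep _ ⟨hchain, rfl, hlast⟩)

end Forward

section Backward

variable (Sedge Aedge Redge) in
def ActiveArrival (i : ι) (t : ℕ) (a b : RLNode ι) : Prop :=
  (E b a ∧ b.time < t) ∨ (E a b ∧ (b.time ≤ t ∨ ReflTransGen E (state i t) b))

variable {i : ι} {t : ℕ}

lemma activeArrival_start {b : RLNode ι} (h : Adjacent E (state i t) b) :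
    ActiveArrival Sedge Aedge Redge i t (state i t) b := by
  rcases h with h | h
  · exact .inr ⟨h, .inr (.single h)⟩
  · have := time_eq_succ h (by simp)
    exact .inl ⟨h, by simp_all [time]⟩

lemma not_activeArrival_action (a : RLNode ι) :
    ¬ ActiveArrival Sedge Aedge Redge i t a (action t) := by
  rintro (⟨-, h⟩ | ⟨h, -⟩)
  exacts [(lt_irrefl t h).elim, not_action_right h]

lemma not_mem_of_reflTransGen_state (hng : ∀ u, ¬ TransGen E (state i t) (reward u))
    {w : RLNode ι} (hw : ReflTransGen E (state i t) w) :
    w ∉ insert (cum (t + 1)) (otherStates i t) := by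
  rintro (rfl | hw')
  · obtain ⟨c, hxc, hc⟩ :=
      TransGen.tail'_iff.1 ((reflTransGen_iff_eq_or_transGen.1 hw).resolve_left (by simp))
    obtain ⟨u, rfl, -⟩ := exists_reward_of_cum_right hc
    exact hng u ((reflTransGen_iff_eq_or_transGen.1 hxc).resolve_left (by simp))
  · exact not_mem_otherStates_of_reflTransGen hw hw'

lemma time_le_or_reflTransGen_of_not_mem {a m b : RLNode ι} (ham : E a m) (hmb : E m b)
    (hm : m ∉ insert (cum (t + 1)) (otherStates i t))
    (hmt : m.time ≤ t ∨ ReflTransGen E (state i t) m) :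
    b.time ≤ t ∨ ReflTransGen E (state i t) b := by
  rcases hmt with hmt | hxm
  · rcases hmt.lt_or_eq with hlt | rfl
    · exact .inl (by have := time_le_succ hmb; omega)
    cases m with
    | state l u =>
      obtain rfl : l = i := by by_contra hl; exact hm (.inr ⟨l, hl, rfl⟩)
      exact .inr (.single hmb)
    | action u => exact (not_action_right ham).elim
    | reward u => cases b <;> simp_all [RLEdge, time]
    | cum v => exact (not_cum_left hmb).elim
  · exact .inr (hxm.tail hmb)

lemma time_lt_of_collider (hng : ∀ u, ¬ TransGen E (state i t) (reward u)) {m b w : RLNode ι}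
    (hbm : E b m) (hmt : m.time ≤ t ∨ ReflTransGen E (state i t) m)
    (hmw : ReflTransGen E m w) (hw : w ∈ insert (cum (t + 1)) (otherStates i t)) :
    b.time < t := by
  rcases hmt with hmt | hxm
  · by_cases hm : ∀ v, m ≠ cum v
    · have := time_eq_succ hbm hm
      omega
    push Not at hm
    obtain ⟨v, rfl⟩ := hm
    rw [eq_of_reflTransGen_cum hmw] at hw
    simp [otherStates, time] at hw hmt
    omega
  · exact (not_mem_of_reflTransGen_state hng (hxm.trans hmw) hw).elim

lemma activeArrival_step (hng : ∀ u, ¬ TransGen E (state i t) (reward u)) {a m b : RLNode ι}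
    (hP : ActiveArrival Sedge Aedge Redge i t a m) (hmb : Adjacent E m b)
    (hnb : ¬ BlocksAt E (insert (cum (t + 1)) (otherStates i t)) a m b) :
    ActiveArrival Sedge Aedge Redge i t m b := by
  rcases hP with ⟨hma, hmt⟩ | ⟨ham, hmt⟩ <;> rcases hmb with hmb | hbm
  · exact .inr ⟨hmb, .inl (by have := time_le_succ hmb; omega)⟩
  · have hm : ∀ v, m ≠ cum v := by rintro v rfl; exact not_cum_left hma
    exact .inl ⟨hbm, by have := time_eq_succ hbm hm; omega⟩
  · refine .inr ⟨hmb, time_le_or_reflTransGen_of_not_mem ham hmb (fun hm => hnb ?_) hmt⟩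
    exact .inl ⟨fun h => asymm hmb h.2, hm⟩
  · refine .inl ⟨hbm, ?_⟩
    by_contra hbt
    exact hnb (.inr ⟨ham, hbm, fun w hmw hw => hbt (time_lt_of_collider hng hbm hmt hmw hw)⟩)

lemma dsep_of_not_transGen_reward (hng : ∀ u, ¬ TransGen E (state i t) (reward u)) :
    DSep E (state i t) (action t) (insert (cum (t + 1)) (otherStates i t)) :=
  dsep_of_invariant (by simp) (ActiveArrival Sedge Aedge Redge i t)
    (fun _ => activeArrival_start) (fun _ _ _ => activeArrival_step hng) not_activeArrival_action

end Backward

end RLEdge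

/-- In the unrolled DBN, under the Markov and faithfulness
assumptions (conditional independence coincides with d-separation), a state
component `s_{i,t}` has a directed path to some future reward `r_{t+τ}`
(`τ ≥ 1`) if and only if `s_{i,t}` is conditionally dependent on `a_t` given
the cumulative future reward `R_{t+1}` and any subset of the other time-`t`
state components. -/
theorem directed_path_to_reward_iff_cond_dependent_on_action
    {ι : Type*} (Sedge : ι → ι → Prop) (Aedge Redge : ι → Prop)
    (CI : RLNode ι → RLNode ι → Set (RLNode ι) → Prop)
    (markov_faithful : ∀ x y Z, CI x y Z ↔ DSep (RLEdge Sedge Aedge Redge) x y Z)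
    (i : ι) (t : ℕ) :
    (∃ τ : ℕ, 1 ≤ τ ∧
        Relation.TransGen (RLEdge Sedge Aedge Redge)
          (RLNode.state i t) (RLNode.reward (t + τ))) ↔
      (∀ S : Set (RLNode ι), S ⊆ {n | ∃ j, j ≠ i ∧ n = RLNode.state j t} →
        ¬ CI (RLNode.state i t) (RLNode.action t)
          (insert (RLNode.cum (t + 1)) S)) := by
  constructor
  · rintro ⟨τ, hτ, hpath⟩ S hS hCI
    exact RLEdge.not_dsep_of_transGen_reward hτ hS hpath ((markov_faithful _ _ _).1 hCI)
  · intro hdep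
    by_contra hnone
    have hno_reward : ∀ u, ¬ Relation.TransGen (RLEdge Sedge Aedge Redge)
        (RLNode.state i t) (RLNode.reward u) := by
      intro u hpath
      have htu : t < u := by
        simpa [RLNode.time] using RLEdge.time_lt_of_transGen hpath (by simp)
      exact hnone ⟨u - t, by omega, by rwa [Nat.add_sub_cancel' htu.le]⟩
    exact hdep (RLNode.otherStates i t) subset_rfl
      ((markov_faithful _ _ _).2 (RLEdge.dsep_of_not_transGen_reward hno_reward))
end

section
/- In the POMDP setting with latent states, if the observation o_t is independent of the domain index k, then under faithfulness there is neither a change in the observation function nor a change in the state dynamics of any state component that is an input to the observation function (i.e., neither o_t nor any parent state of o_t has an edge with k). -/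
/-- Nodes of the augmented POMDP dynamic Bayesian network: latent states
`s_{i,t}`, observations `o_t`, actions `a_t`, rewards `r_t`, and the
domain-index variable `k` encoding mechanism changes across domains. -/
inductive PONode (ι : Type*) where
  | st (i : ι) (t : ℕ)
  | obs (t : ℕ)
  | act (t : ℕ)
  | rew (t : ℕ)
  | dom

/-- Edges of the augmented POMDP DBN, given the time-invariant structural
masks: `Sedge i j` (`s_{i,t} → s_{j,t+1}`), `Redge i` (`s_{i,t} → r_{t+1}`),
`Oedge i` (`s_{i,t} → o_t`), `Aedge j` (`a_t → s_{j,t+1}`), `a_t → r_{t+1}`,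
and the change edges from the domain index `k`: `DomO` (`k → o_t`, a changing
observation function), `DomS i` (`k → s_{i,t}`, changing dynamics of `s_i`),
and `DomR` (`k → r_t`, a changing reward function). -/
def POEdge {ι : Type*} (Sedge : ι → ι → Prop) (Aedge Redge Oedge : ι → Prop)
    (DomO DomR : Prop) (DomS : ι → Prop) :
    PONode ι → PONode ι → Prop
  | PONode.st i t, PONode.st j t' => t' = t + 1 ∧ Sedge i j
  | PONode.st i t, PONode.rew t' => t' = t + 1 ∧ Redge i
  | PONode.st i t, PONode.obs t' => t' = t ∧ Oedge i
  | PONode.act t, PONode.st j t' => t' = t + 1 ∧ Aedge j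
  | PONode.act t, PONode.rew t' => t' = t + 1
  | PONode.dom, PONode.obs _ => DomO
  | PONode.dom, PONode.st i _ => DomS i
  | PONode.dom, PONode.rew _ => DomR
  | _, _ => False

/-- `s_{i,t}` belongs to `s^min`: it has a directed path to some future
reward `r_{t+τ}`, `τ ≥ 1`. -/
def InSMin {ι : Type*} (E : PONode ι → PONode ι → Prop) (i : ι) (t : ℕ) : Prop :=
  ∃ τ : ℕ, 1 ≤ τ ∧ Relation.TransGen E (PONode.st i t) (PONode.rew (t + τ))

/-- In the POMDP setting with latent states, if the
observation `o_t` is independent of the domain index `k` (unconditionally),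
then under faithfulness (conditional independence implies d-separation)
there is neither a change in the observation function nor a change in the
state dynamics of any state component that is an input to the observation
function: neither `o_t` nor any parent state of `o_t` has an edge with `k`. -/
theorem obs_indep_dom_implies_no_obs_or_input_change
    {ι : Type*} (Sedge : ι → ι → Prop) (Aedge Redge Oedge : ι → Prop)
    (DomO DomR : Prop) (DomS : ι → Prop)
    (CI : PONode ι → PONode ι → Set (PONode ι) → Prop)
    (faithful : ∀ x y Z, CI x y Z →
      DSep (POEdge Sedge Aedge Redge Oedge DomO DomR DomS) x y Z)
    (t : ℕ)
    (hindep : CI (PONode.obs t) PONode.dom (∅ : Set (PONode ι))) :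
    ¬ (POEdge Sedge Aedge Redge Oedge DomO DomR DomS)
        PONode.dom (PONode.obs t) ∧
    ∀ i : ι, (POEdge Sedge Aedge Redge Oedge DomO DomR DomS)
        (PONode.st i t) (PONode.obs t) →
      ¬ (POEdge Sedge Aedge Redge Oedge DomO DomR DomS)
          PONode.dom (PONode.st i t) := by
  have hdsep := faithful _ _ _ hindep
  constructor
  · intro hE
    have hwalk : IsWalkBetween (POEdge Sedge Aedge Redge Oedge DomO DomR DomS)
        [PONode.obs t, PONode.dom] (PONode.obs t) PONode.dom := by
      refine ⟨?_, rfl, rfl⟩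
      exact List.isChain_pair.mpr (Or.inr hE)
    obtain ⟨l₁, l₂, i, m, j, hp, _⟩ := hdsep _ hwalk
    have := congrArg List.length hp
    simp [List.length_append] at this
    omega
  · intro i hsto hdomst
    have hwalk : IsWalkBetween (POEdge Sedge Aedge Redge Oedge DomO DomR DomS)
        [PONode.obs t, PONode.st i t, PONode.dom] (PONode.obs t) PONode.dom := by
      refine ⟨?_, rfl, rfl⟩
      refine List.IsChain.cons_cons (Or.inr hsto) ?_
      exact List.isChain_pair.mpr (Or.inr hdomst)
    obtain ⟨l₁, l₂, a, m, b, hp, hblk⟩ := hdsep _ hwalk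
    have hlen := congrArg List.length hp
    simp [List.length_append] at hlen
    have hl1 : l₁ = [] := List.eq_nil_of_length_eq_zero (by omega)
    subst hl1
    simp only [List.nil_append, List.cons.injEq] at hp
    obtain ⟨ha, hm, hb, hl2⟩ := hp
    subst ha; subst hm; subst hb
    rcases hblk with ⟨_, hmem⟩ | ⟨hoe, _, _⟩
    · exact hmem
    · exact hoe
end
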